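/- arXiv:1007.4150 — 3 statements merged into one kernel-verified Lean document; each statement's English description precedes it below -/
import Mathlib

section
/- Let r ≥ 3 and n > r be integers, and let P be a clique partition of the r-element subsets of [n]. Then the sum over all cliques C ∈ P of |C| is at least n · cp(n-1, r-1). -/
/-- A clique partition of the `r`-element subsets of `[n]`: a collection of
proper subsets of `[n]` such that every `r`-element subset is contained in
exactly one member. -/
def IsCliquePartition (n r : ℕ) (P : Finset (Finset (Fin n))) : Prop :=
  (∀ A ∈ P, A ≠ Finset.univ) ∧
  ∀ S : Finset (Fin n), S.card = r → ∃! A, A ∈ P ∧ S ⊆ A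

/-- `cp n r` is the minimum size of a clique partition of the `r`-subsets of `[n]`. -/
noncomputable def cp (n r : ℕ) : ℕ :=
  sInf {t | ∃ P : Finset (Finset (Fin n)), IsCliquePartition n r P ∧ P.card = t}

/-- Generalized binomial coefficient `C(x, r) = x(x-1)⋯(x-r+1)/r!` for real `x`. -/
noncomputable def rbinom (x : ℝ) (r : ℕ) : ℝ :=
  (∏ i ∈ Finset.range r, (x - i)) / (Nat.factorial r)

/-!
Deleting a vertex `v` from the cliques of `P` that contain it gives a clique partition of the
`(r-1)`-subsets of the remaining `n-1` vertices (the link of `v`), since an `(r-1)`-set `S` avoiding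
`v` lies in `C ∋ v` exactly when the `r`-set `S ∪ {v}` does. Hence at least `cp(n-1, r-1)` cliques
contain each vertex, and summing over the vertices counts every clique `C` exactly `|C|` times.
-/

open Finset

section

variable {m : ℕ}

lemma preimage_succAboveEmb_ne_univ {C : Finset (Fin (m + 1))} {v : Fin (m + 1)}
    (hC : C ≠ univ) (hv : v ∈ C) :
    C.preimage v.succAboveEmb v.succAboveEmb.injective.injOn ≠ univ := by
  refine fun h => hC (eq_univ_of_forall fun y => ?_)
  rcases v.eq_self_or_eq_succAbove y with rfl | ⟨x, rfl⟩
  · exact hv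
  · exact mem_preimage.1 (h.symm ▸ mem_univ x)

lemma insert_map_succAboveEmb_subset_iff {C : Finset (Fin (m + 1))} {v : Fin (m + 1)}
    {S : Finset (Fin m)} (hv : v ∈ C) :
    insert v (S.map v.succAboveEmb) ⊆ C ↔
      S ⊆ C.preimage v.succAboveEmb v.succAboveEmb.injective.injOn := by
  rw [insert_subset_iff, map_subset_iff_subset_preimage, and_iff_right hv]

lemma card_insert_map_succAboveEmb (v : Fin (m + 1)) (S : Finset (Fin m)) :
    #(insert v (S.map v.succAboveEmb)) = #S + 1 := by
  rw [card_insert_of_notMem (by simp [Fin.succAbove_ne]), card_map]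

noncomputable def vertexLink (P : Finset (Finset (Fin (m + 1)))) (v : Fin (m + 1)) :
    Finset (Finset (Fin m)) :=
  {C ∈ P | v ∈ C}.image fun C => C.preimage v.succAboveEmb v.succAboveEmb.injective.injOn

lemma card_vertexLink_le (P : Finset (Finset (Fin (m + 1)))) (v : Fin (m + 1)) :
    #(vertexLink P v) ≤ #{C ∈ P | v ∈ C} :=
  card_image_le

theorem IsCliquePartition.isCliquePartition_vertexLink {r : ℕ} {P : Finset (Finset (Fin (m + 1)))}
    (hP : IsCliquePartition (m + 1) (r + 1) P) (v : Fin (m + 1)) :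
    IsCliquePartition m r (vertexLink P v) := by
  obtain ⟨hproper, hcover⟩ := hP
  refine ⟨?_, fun S hS => ?_⟩
  · simp only [vertexLink, mem_image, mem_filter]
    rintro _ ⟨C, ⟨hCP, hvC⟩, rfl⟩
    exact preimage_succAboveEmb_ne_univ (hproper C hCP) hvC
  · obtain ⟨A, ⟨hAP, hTA⟩, huniq⟩ :=
      hcover _ ((card_insert_map_succAboveEmb v S).trans (congrArg (· + 1) hS))
    have hvA : v ∈ A := hTA (mem_insert_self _ _)
    refine ⟨_, ⟨mem_image_of_mem _ (mem_filter.2 ⟨hAP, hvA⟩),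
      (insert_map_succAboveEmb_subset_iff hvA).1 hTA⟩, ?_⟩
    simp only [vertexLink, mem_image, mem_filter]
    rintro _ ⟨⟨C, ⟨hCP, hvC⟩, rfl⟩, hSC⟩
    rw [huniq C ⟨hCP, (insert_map_succAboveEmb_subset_iff hvC).2 hSC⟩]

end

lemma cp_le_card {n r : ℕ} {P : Finset (Finset (Fin n))} (hP : IsCliquePartition n r P) :
    cp n r ≤ #P :=
  Nat.sInf_le ⟨P, hP, rfl⟩

lemma sum_card_filter_mem_eq_sum_card {α : Type*} [Fintype α] [DecidableEq α]
    (P : Finset (Finset α)) : ∑ v, #{C ∈ P | v ∈ C} = ∑ C ∈ P, #C := by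
  simpa [bipartiteAbove, bipartiteBelow] using
    sum_card_bipartiteAbove_eq_sum_card_bipartiteBelow (s := univ) (t := P) (r := (· ∈ ·))

theorem sum_card_cliquePartition_general (n r : ℕ) (hr : 3 ≤ r)
    (P : Finset (Finset (Fin n))) (hP : IsCliquePartition n r P) :
    n * cp (n - 1) (r - 1) ≤ ∑ C ∈ P, C.card := by
  obtain _ | m := n
  · simp
  obtain ⟨k, rfl⟩ : ∃ k, r = k + 1 := ⟨r - 1, by omega⟩
  calc (m + 1) * cp (m + 1 - 1) (k + 1 - 1) = ∑ _v : Fin (m + 1), cp m k := by simp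
    _ ≤ ∑ v : Fin (m + 1), #{C ∈ P | v ∈ C} := sum_le_sum fun v _ =>
        (cp_le_card (hP.isCliquePartition_vertexLink v)).trans (card_vertexLink_le P v)
    _ = ∑ C ∈ P, #C := sum_card_filter_mem_eq_sum_card P

/-- for `r ≥ 3`, `n > r`, any clique partition `P` of the
`r`-subsets of `[n]` satisfies `∑_{C ∈ P} |C| ≥ n · cp(n-1, r-1)`. -/
theorem sum_card_cliquePartition (n r : ℕ) (hr : 3 ≤ r) (hn : r < n)
    (P : Finset (Finset (Fin n))) (hP : IsCliquePartition n r P) :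
    n * cp (n - 1) (r - 1) ≤ ∑ C ∈ P, C.card :=
  sum_card_cliquePartition_general n r hr P hP
end

section
/- Let r ≥ 2 be an integer and let n ≥ r + 1 be a positive integer. Define the positive real number q by the equation n = q² + q + r - 1. Then cp(n, r) ≥ C(n, r)/C(q + r - 1, r), where C(x, r) = x(x-1)···(x-r+1)/r! denotes the generalized binomial coefficient for real x. -/
open Finset Polynomial

section Pochhammer

variable {S : Type*} [Ring S] [PartialOrder S] [IsStrictOrderedRing S]

theorem ascPochhammer_nonneg (k : ℕ) {s : S} (hs : 0 ≤ s) : 0 ≤ (ascPochhammer S k).eval s := by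
  rcases hs.lt_or_eq with hs | rfl
  · exact (ascPochhammer_pos k s hs).le
  · rw [ascPochhammer_eval_zero]; split_ifs <;> simp

theorem monotoneOn_ascPochhammer_eval (k : ℕ) :
    MonotoneOn (ascPochhammer S k).eval (Set.Ici 0) := by
  intro a ha b hb hab
  have h := monotoneOn_descPochhammer_eval (S := S) k (a := a + (k - 1)) (b := b + (k - 1))
    (by simpa using ha) (by simpa using hb) (by simpa using hab)
  simpa [descPochhammer_eval_eq_ascPochhammer, sub_add] using h

theorem strictMonoOn_ascPochhammer_eval {k : ℕ} (hk : k ≠ 0) :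
    StrictMonoOn (ascPochhammer S k).eval (Set.Ici 0) := by
  obtain ⟨k, rfl⟩ := Nat.exists_eq_add_one_of_ne_zero hk
  intro a (ha : 0 ≤ a) b (hb : 0 ≤ b) hab
  simp only [ascPochhammer_succ_eval]
  calc (ascPochhammer S k).eval a * (a + k) ≤ (ascPochhammer S k).eval b * (a + k) := by
        gcongr
        exact monotoneOn_ascPochhammer_eval k ha hb hab.le
    _ < (ascPochhammer S k).eval b * (b + k) := by
        gcongr
        exact ascPochhammer_pos k b (ha.trans_lt hab)

end Pochhammer

theorem convexOn_ascPochhammer_eval {𝕜 : Type*} [Field 𝕜] [LinearOrder 𝕜] [IsStrictOrderedRing 𝕜]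
    (k : ℕ) : ConvexOn 𝕜 (Set.Ici 0) (ascPochhammer 𝕜 k).eval := by
  induction k with
  | zero => simpa using convexOn_const (1 : 𝕜) (convex_Ici 0)
  | succ k ih =>
    have hlin : ConvexOn 𝕜 (Set.Ici 0) (fun x : 𝕜 => x + k) :=
      (convexOn_id (convex_Ici 0)).add_const _
    have : (ascPochhammer 𝕜 (k + 1)).eval = (ascPochhammer 𝕜 k).eval * fun x : 𝕜 => x + k := by
      funext x; exact ascPochhammer_succ_eval k x
    rw [this]
    refine ih.mul hlin (fun x hx => ascPochhammer_nonneg k hx)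
      (fun x (hx : 0 ≤ x) => by positivity)
      ((monotoneOn_ascPochhammer_eval k).monovaryOn fun a _ b _ hab => by simpa using hab)

theorem Nat.ascFactorial_sub_eq_descFactorial (m r : ℕ) :
    (m - r).ascFactorial (r + 1) = m.descFactorial (r + 1) := by
  rcases le_or_gt r m with h | h
  · obtain ⟨s, rfl⟩ := Nat.exists_eq_add_of_le' h
    rw [Nat.add_sub_cancel, ← Nat.add_descFactorial_eq_ascFactorial', Nat.add_succ_sub_one]
  · rw [Nat.sub_eq_zero_of_le h.le, Nat.zero_ascFactorial, Nat.descFactorial_of_lt (by omega)]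

theorem Finset.sum_card_filter_mem {V : Type*} [Fintype V] [DecidableEq V]
    (P : Finset (Finset V)) : ∑ x, #{A ∈ P | x ∈ A} = ∑ A ∈ P, #A := by
  simpa [bipartiteAbove, bipartiteBelow] using
    sum_card_bipartiteAbove_eq_sum_card_bipartiteBelow (s := univ) (t := P) (· ∈ ·)

theorem descFactorial_succ_le_sum_card_mul {V : Type*} [Fintype V] [DecidableEq V]
    {P : Finset (Finset V)} {r : ℕ} {c : ℝ}
    (hdeg : ∀ x, ((Fintype.card V - 1).descFactorial r : ℝ) ≤ #{A ∈ P | x ∈ A} * c) :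
    ((Fintype.card V).descFactorial (r + 1) : ℝ) ≤ (∑ A ∈ P, (#A : ℝ)) * c := by
  calc ((Fintype.card V).descFactorial (r + 1) : ℝ)
      = ∑ _x : V, ((Fintype.card V - 1).descFactorial r : ℝ) := by
        rw [sum_const, card_univ, nsmul_eq_mul]
        rcases Nat.eq_zero_or_eq_succ_pred (Fintype.card V) with h | h
        · simp [h]
        · rw [h, Nat.succ_descFactorial_succ, Nat.succ_sub_one, Nat.cast_mul]
    _ ≤ ∑ x, #{A ∈ P | x ∈ A} * c := sum_le_sum fun x _ => hdeg x
    _ = (∑ A ∈ P, (#A : ℝ)) * c := by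
        rw [← sum_mul]; exact_mod_cast congrArg (fun m : ℕ => (m : ℝ) * c) (sum_card_filter_mem P)

/-- `IsCliquePartition n r` (its instance `V = Fin n`, definitionally) over an arbitrary finite
ground type, so that it applies to links, which live on subtypes. -/
def IsCliquePartitionOn {V : Type*} [Fintype V] (r : ℕ) (P : Finset (Finset V)) : Prop :=
  (∀ A ∈ P, A ≠ univ) ∧ ∀ S : Finset V, #S = r → ∃! A, A ∈ P ∧ S ⊆ A

def link {V : Type*} [DecidableEq V] (P : Finset (Finset V)) (x : V) :
    Finset (Finset {y // y ≠ x}) :=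
  {A ∈ P | x ∈ A}.image fun A => A.subtype (· ≠ x)

theorem card_link {V : Type*} [DecidableEq V] (P : Finset (Finset V)) (x : V) :
    #(link P x) = #{A ∈ P | x ∈ A} := by
  refine card_image_of_injOn fun A hA B hB hAB => ?_
  have hAB' : A.erase x = B.erase x := by
    simpa [← filter_ne', subtype_map] using
      congrArg (Finset.map (Function.Embedding.subtype _)) hAB
  exact erase_injOn' x (mem_filter.mp hA).2 (mem_filter.mp hB).2 hAB'

def nonIncident {V : Type*} [Fintype V] [DecidableEq V] (P : Finset (Finset V)) :
    Finset (Finset V × V) :=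
  {z ∈ P ×ˢ univ | z.2 ∉ z.1}

section NonIncident

variable {V : Type*} [Fintype V] [DecidableEq V] {P : Finset (Finset V)}

theorem sum_nonIncident_inv_sub_card (hP : ∀ A ∈ P, A ≠ univ) :
    ∑ z ∈ nonIncident P, ((Fintype.card V : ℝ) - #z.1)⁻¹ = #P := by
  rw [nonIncident, sum_filter, sum_product, card_eq_sum_ones, Nat.cast_sum]
  refine sum_congr rfl fun A hA => ?_
  have hA' : #A < Fintype.card V := (card_lt_iff_ne_univ A).mpr (hP A hA)
  rw [← sum_filter]
  simp only [filter_not, subset_univ, filter_mem_eq_of_subset, sum_const, card_sdiff, card_univ,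
    inter_univ, nsmul_eq_mul, Nat.cast_sub hA'.le, Nat.cast_one]
  exact mul_inv_cancel₀ (sub_ne_zero.mpr (by exact_mod_cast hA'.ne'))

theorem sum_nonIncident_inv_sub_degree (hP : ∀ x, ∃ A ∈ P, x ∉ A) :
    ∑ z ∈ nonIncident P, ((#P : ℝ) - #{A ∈ P | z.2 ∈ A})⁻¹ = Fintype.card V := by
  rw [nonIncident, sum_filter, sum_product_right, Fintype.card, card_eq_sum_ones (univ : Finset V),
    Nat.cast_sum]
  refine sum_congr rfl fun x _ => ?_
  have hx : #{A ∈ P | x ∈ A} < #P := card_lt_card (filter_ssubset.mpr (hP x))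
  rw [← sum_filter]
  simp only [filter_not, sum_const, card_sdiff_of_subset (filter_subset _ _), nsmul_eq_mul,
    Nat.cast_sub hx.le, Nat.cast_one]
  exact mul_inv_cancel₀ (sub_ne_zero.mpr (by exact_mod_cast hx.ne'))

end NonIncident

namespace IsCliquePartitionOn

variable {V : Type*} [Fintype V] [DecidableEq V] {r : ℕ} {P : Finset (Finset V)}

theorem sum_choose_card (hP : IsCliquePartitionOn r P) :
    ∑ A ∈ P, (#A).choose r = (Fintype.card V).choose r := by
  have hcover : (univ : Finset V).powersetCard r = P.biUnion (powersetCard r) := by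
    ext S
    simp only [mem_powersetCard, mem_biUnion, subset_univ, true_and]
    refine ⟨fun hS => ?_, fun ⟨_, _, _, hS⟩ => hS⟩
    obtain ⟨A, ⟨hA, hSA⟩, -⟩ := hP.2 S hS
    exact ⟨A, hA, hSA, hS⟩
  have hdisj : (P : Set (Finset V)).PairwiseDisjoint (powersetCard r) := by
    intro A hA B hB hAB
    refine disjoint_left.mpr fun S hSA hSB => hAB ?_
    rw [mem_powersetCard] at hSA hSB
    exact (hP.2 S hSA.2).unique ⟨hA, hSA.1⟩ ⟨hB, hSB.1⟩
  simpa [hcover, card_biUnion hdisj] using card_powersetCard r (univ : Finset V)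

theorem sum_descFactorial_card (hP : IsCliquePartitionOn r P) :
    ∑ A ∈ P, (#A).descFactorial r = (Fintype.card V).descFactorial r := by
  simp only [Nat.descFactorial_eq_factorial_mul_choose, ← mul_sum, hP.sum_choose_card]

protected theorem link (hP : IsCliquePartitionOn (r + 1) P) (x : V) :
    IsCliquePartitionOn r (link P x) := by
  constructor
  · simp only [link, mem_image, mem_filter]
    rintro _ ⟨A, ⟨hA, hxA⟩, rfl⟩ huniv
    obtain ⟨z, hz⟩ : ∃ z, z ∉ A := by simpa [eq_univ_iff_forall] using hP.1 A hA
    have hzx : z ≠ x := fun h => hz (h ▸ hxA)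
    have := huniv ▸ mem_univ (⟨z, hzx⟩ : {y // y ≠ x})
    simp [hz] at this
  · intro S hS
    set T : Finset V := insert x (S.map (Function.Embedding.subtype _))
    have hT : #T = r + 1 := by
      rw [card_insert_of_notMem (by simp), card_map, hS]
    have hsub : ∀ {A : Finset V}, x ∈ A → (S ⊆ A.subtype (· ≠ x) ↔ T ⊆ A) := by
      intro A hxA
      simp [T, hxA, subset_iff]
    obtain ⟨A, ⟨hA, hTA⟩, huniq⟩ := hP.2 T hT
    have hxA : x ∈ A := hTA (mem_insert_self _ _)
    refine ⟨A.subtype (· ≠ x),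
      ⟨mem_image_of_mem _ (mem_filter.mpr ⟨hA, hxA⟩), (hsub hxA).mpr hTA⟩, ?_⟩
    simp only [link, mem_image, mem_filter]
    rintro _ ⟨⟨B, ⟨hB, hxB⟩, rfl⟩, hSB⟩
    rw [huniq B ⟨hB, (hsub hxB).mp hSB⟩]

theorem existsUnique_mem_mem (hP : IsCliquePartitionOn 2 P) {a b : V} (hab : a ≠ b) :
    ∃! L, L ∈ P ∧ a ∈ L ∧ b ∈ L := by
  simpa [insert_subset_iff] using hP.2 {a, b} (card_pair hab)

theorem card_le_card_filter_mem (hP : IsCliquePartitionOn 2 P) {L : Finset V} (hL : L ∈ P)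
    {p : V} (hpL : p ∉ L) : #L ≤ #{M ∈ P | p ∈ M} := by
  have hline : ∀ a ∈ L, ∃ M ∈ P, p ∈ M ∧ a ∈ M := fun a ha =>
    ((hP.existsUnique_mem_mem (ne_of_mem_of_not_mem ha hpL).symm).exists).imp fun M h => by
      simpa [and_assoc] using h
  choose! line hlineP hpline haline using hline
  refine card_le_card_of_injOn line (fun a ha => mem_filter.mpr ⟨hlineP a ha, hpline a ha⟩) ?_
  intro a ha b hb hab
  by_contra hne
  obtain ⟨M, -, huniq⟩ := hP.existsUnique_mem_mem hne
  have hLM : L = M := huniq L ⟨hL, ha, hb⟩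
  have hlineM : line a = M := huniq _ ⟨hlineP a ha, haline a ha, hab ▸ haline b hb⟩
  exact hpL (hLM ▸ hlineM ▸ hpline a ha)

theorem exists_notMem (hP : IsCliquePartitionOn 2 P) (hV : 2 ≤ Fintype.card V) (p : V) :
    ∃ L ∈ P, p ∉ L := by
  by_contra! hall
  obtain ⟨a, hap⟩ := Fintype.exists_ne_of_one_lt_card hV p
  obtain ⟨L, ⟨hL, -, haL⟩, huniq⟩ := hP.existsUnique_mem_mem hap.symm
  refine hP.1 L hL (eq_univ_of_forall fun c => ?_)
  rcases eq_or_ne c a with rfl | hca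
  · exact haL
  obtain ⟨M, ⟨hM, haM, hcM⟩, -⟩ := hP.existsUnique_mem_mem hca.symm
  rwa [← huniq M ⟨hM, hall M hM, haM⟩]

theorem card_filter_mem_pos (hP : IsCliquePartitionOn 2 P) (hV : 2 ≤ Fintype.card V) (p : V) :
    0 < #{M ∈ P | p ∈ M} := by
  obtain ⟨a, hap⟩ := Fintype.exists_ne_of_one_lt_card hV p
  obtain ⟨L, ⟨hL, hpL, -⟩, -⟩ := hP.existsUnique_mem_mem hap.symm
  exact card_pos.mpr ⟨L, mem_filter.mpr ⟨hL, hpL⟩⟩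

/-- Conway's argument: if `|P| < n`, then `|P| (n - |L|) > n (|P| - deg p)` for every
non-incident pair `(L, p)`, yet the reciprocals of both sides sum to `1` over these pairs. -/
theorem deBruijn_erdos (hP : IsCliquePartitionOn 2 P) (hV : 2 ≤ Fintype.card V) :
    Fintype.card V ≤ #P := by
  by_contra! hlt
  have hnotMem := hP.exists_notMem hV
  obtain ⟨p⟩ : Nonempty V := Fintype.card_pos_iff.mp (by omega)
  obtain ⟨L, hL, hpL⟩ := hnotMem p
  have hpair : ∀ z ∈ nonIncident P, ((#P : ℝ) * (Fintype.card V - #z.1))⁻¹ <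
      ((Fintype.card V : ℝ) * (#P - #{M ∈ P | z.2 ∈ M}))⁻¹ := by
    rintro ⟨K, y⟩ hz
    obtain ⟨hK, hyK⟩ : K ∈ P ∧ y ∉ K := by simpa [nonIncident] using hz
    have hKd : (#K : ℝ) ≤ #{M ∈ P | y ∈ M} := by
      exact_mod_cast hP.card_le_card_filter_mem hK hyK
    have hdt : (#{M ∈ P | y ∈ M} : ℝ) < #P := by
      exact_mod_cast card_lt_card (filter_ssubset.mpr (hnotMem y))
    have hd : (0 : ℝ) < #{M ∈ P | y ∈ M} := by exact_mod_cast hP.card_filter_mem_pos hV y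
    have htn : (#P : ℝ) < Fintype.card V := by exact_mod_cast hlt
    apply inv_strictAnti₀
    · exact mul_pos (by linarith) (by linarith)
    · nlinarith
  have hsum := sum_lt_sum_of_nonempty ⟨(L, p), by simp [nonIncident, hL, hpL]⟩ hpair
  have ht : (#P : ℝ) ≠ 0 := by exact_mod_cast (card_pos.mpr ⟨L, hL⟩).ne'
  have hn : (Fintype.card V : ℝ) ≠ 0 := by positivity
  simp only [mul_inv] at hsum
  rw [← mul_sum, ← mul_sum, sum_nonIncident_inv_sub_card hP.1,
    sum_nonIncident_inv_sub_degree hnotMem, inv_mul_cancel₀ ht, inv_mul_cancel₀ hn] at hsum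
  exact lt_irrefl 1 hsum

theorem card_mul_ascPochhammer_average_le (hP : IsCliquePartitionOn (r + 1) P) :
    #P * (ascPochhammer ℝ (r + 1)).eval ((∑ A ∈ P, ((#A - r : ℕ) : ℝ)) / #P) ≤
      (Fintype.card V).descFactorial (r + 1) := by
  rcases P.eq_empty_or_nonempty with rfl | ⟨A₀, hA₀⟩
  · rw [card_empty, Nat.cast_zero, zero_mul]
    positivity
  have ht : (0 : ℝ) < #P := by exact_mod_cast card_pos.mpr ⟨A₀, hA₀⟩
  have hsum : ∑ A ∈ P, (ascPochhammer ℝ (r + 1)).eval ((#A - r : ℕ) : ℝ) =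
      (Fintype.card V).descFactorial (r + 1) := by
    simp only [ascPochhammer_nat_eq_natCast_ascFactorial, Nat.ascFactorial_sub_eq_descFactorial]
    exact_mod_cast hP.sum_descFactorial_card
  have hjensen := (convexOn_ascPochhammer_eval (r + 1)).map_sum_le (t := P)
    (w := fun _ => (#P : ℝ)⁻¹) (p := fun A => ((#A - r : ℕ) : ℝ)) (fun _ _ => by positivity)
    (by rw [sum_const, nsmul_eq_mul, mul_inv_cancel₀ ht.ne'])
    (fun _ _ => Set.mem_Ici.mpr (Nat.cast_nonneg _))
  simp only [smul_eq_mul, ← mul_sum, hsum] at hjensen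
  rwa [← le_div_iff₀' ht, div_eq_inv_mul, div_eq_inv_mul]

theorem descFactorial_succ_le (hP : IsCliquePartitionOn (r + 1) P) (hr : r ≠ 0) {q : ℝ}
    (hq : 0 ≤ q) (hdeg : ∀ x, ((Fintype.card V - 1).descFactorial r : ℝ) ≤
      #{A ∈ P | x ∈ A} * (ascPochhammer ℝ r).eval q) :
    ((Fintype.card V).descFactorial (r + 1) : ℝ) ≤ #P * (ascPochhammer ℝ (r + 1)).eval q := by
  rcases P.eq_empty_or_nonempty with rfl | ⟨A₀, hA₀⟩
  · rw [← hP.sum_descFactorial_card]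
    simp
  have ht : (0 : ℝ) < #P := by exact_mod_cast card_pos.mpr ⟨A₀, hA₀⟩
  set σ := (∑ A ∈ P, ((#A - r : ℕ) : ℝ)) / #P
  have hcard : ∑ A ∈ P, (#A : ℝ) ≤ #P * (σ + r) := by
    calc ∑ A ∈ P, (#A : ℝ) ≤ ∑ A ∈ P, (((#A - r : ℕ) : ℝ) + r) :=
          sum_le_sum fun A _ => by exact_mod_cast (by omega : #A ≤ #A - r + r)
      _ = #P * (σ + r) := by
          rw [sum_add_distrib, sum_const, nsmul_eq_mul, mul_add, mul_div_cancel₀ _ ht.ne']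
  have hupper : ((Fintype.card V).descFactorial (r + 1) : ℝ) ≤
      #P * (σ + r) * (ascPochhammer ℝ r).eval q :=
    (descFactorial_succ_le_sum_card_mul hdeg).trans <|
      mul_le_mul_of_nonneg_right hcard (ascPochhammer_nonneg r hq)
  have hσ : σ ≤ q := by
    have hσ₀ : 0 ≤ σ := div_nonneg (sum_nonneg fun A _ => Nat.cast_nonneg _) ht.le
    have hpos : 0 < #P * (σ + r) := by positivity
    refine ((strictMonoOn_ascPochhammer_eval hr).le_iff_le hσ₀ hq).mp
      (le_of_mul_le_mul_left ?_ hpos)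
    calc #P * (σ + r) * (ascPochhammer ℝ r).eval σ = #P * (ascPochhammer ℝ (r + 1)).eval σ := by
          rw [ascPochhammer_succ_eval]; ring
      _ ≤ _ := hP.card_mul_ascPochhammer_average_le.trans hupper
  calc ((Fintype.card V).descFactorial (r + 1) : ℝ)
      ≤ #P * (σ + r) * (ascPochhammer ℝ r).eval q := hupper
    _ ≤ #P * (q + r) * (ascPochhammer ℝ r).eval q := by
        gcongr
        exact ascPochhammer_nonneg r hq
    _ = #P * (ascPochhammer ℝ (r + 1)).eval q := by rw [ascPochhammer_succ_eval]; ring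

theorem descFactorial_le_card_mul_ascPochhammer (hr : 2 ≤ r) (hP : IsCliquePartitionOn r P)
    {q : ℝ} (hq : 0 < q) (hV : (Fintype.card V : ℝ) = q ^ 2 + q + r - 1) :
    ((Fintype.card V).descFactorial r : ℝ) ≤ #P * (ascPochhammer ℝ r).eval q := by
  induction r, hr using Nat.le_induction generalizing V with
  | base =>
    have h2 : 2 ≤ Fintype.card V := by
      have : (1 : ℝ) < Fintype.card V := by rw [hV]; push_cast; nlinarith
      exact_mod_cast this
    have hdesc : ((Fintype.card V).descFactorial 2 : ℝ) =
        Fintype.card V * (Fintype.card V - 1) := by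
      rw [← descPochhammer_eval_eq_descFactorial, descPochhammer_eval_eq_prod_range]
      simp [prod_range_succ]
    have hasc : (ascPochhammer ℝ 2).eval q = Fintype.card V - 1 := by
      simp only [ascPochhammer_succ_eval, ascPochhammer_zero, eval_one, hV]; push_cast; ring
    rw [hdesc, hasc]
    gcongr
    · have : (2 : ℝ) ≤ Fintype.card V := by exact_mod_cast h2
      linarith
    · exact_mod_cast hP.deBruijn_erdos h2
  | succ r hr ih =>
    refine hP.descFactorial_succ_le (by omega) hq.le fun x => ?_
    have hcard : Fintype.card {y // y ≠ x} = Fintype.card V - 1 := by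
      simp only [ne_eq, Fintype.card_subtype_compl, Fintype.card_unique]
    have hV' : (Fintype.card {y // y ≠ x} : ℝ) = q ^ 2 + q + r - 1 := by
      rw [hcard, Nat.cast_sub (Fintype.card_pos_iff.mpr ⟨x⟩), hV]; push_cast; ring
    simpa [hcard, card_link] using ih (hP.link x) hV'

end IsCliquePartitionOn

theorem isCliquePartitionOn_powersetCard {V : Type*} [Fintype V] {r : ℕ}
    (h : r < Fintype.card V) : IsCliquePartitionOn r ((univ : Finset V).powersetCard r) := by
  refine ⟨fun A hA hAu => ?_, fun S hS =>
    ⟨S, ⟨mem_powersetCard.mpr ⟨subset_univ S, hS⟩, subset_rfl⟩, ?_⟩⟩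
  · rw [mem_powersetCard, hAu, card_univ] at hA
    omega
  · rintro A ⟨hA, hSA⟩
    exact (eq_of_subset_of_card_le hSA (by rw [(mem_powersetCard.mp hA).2, hS])).symm

theorem exists_isCliquePartition_card_eq_cp {n r : ℕ} (h : r < n) :
    ∃ P, IsCliquePartition n r P ∧ #P = cp n r :=
  Nat.sInf_mem (s := {t | ∃ P : Finset (Finset (Fin n)), IsCliquePartition n r P ∧ #P = t})
    ⟨_, _, isCliquePartitionOn_powersetCard (by simpa using h), rfl⟩

theorem rbinom_eq_descPochhammer_eval (x : ℝ) (r : ℕ) :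
    rbinom x r = (descPochhammer ℝ r).eval x / r.factorial := by
  rw [rbinom, descPochhammer_eval_eq_prod_range]

theorem rbinom_natCast (n r : ℕ) : rbinom n r = n.descFactorial r / r.factorial := by
  rw [rbinom_eq_descPochhammer_eval, descPochhammer_eval_eq_descFactorial]

theorem rbinom_add_sub_one (x : ℝ) (r : ℕ) :
    rbinom (x + r - 1) r = (ascPochhammer ℝ r).eval x / r.factorial := by
  rw [rbinom_eq_descPochhammer_eval, descPochhammer_eval_eq_ascPochhammer]
  congr 3
  ring

/-- for `r ≥ 2`, `n ≥ r + 1`, with `q > 0` real defined by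
`n = q² + q + r - 1`, we have `cp(n, r) ≥ C(n, r)/C(q + r - 1, r)`. -/
theorem cp_absolute_lower (r n : ℕ) (hr : 2 ≤ r) (hn : r + 1 ≤ n)
    (q : ℝ) (hq : 0 < q) (hnq : (n : ℝ) = q ^ 2 + q + r - 1) :
    rbinom (n : ℝ) r / rbinom (q + r - 1) r ≤ (cp n r : ℝ) := by
  obtain ⟨P, hP, hcard⟩ := exists_isCliquePartition_card_eq_cp (by omega : r < n)
  have hbound := IsCliquePartitionOn.descFactorial_le_card_mul_ascPochhammer hr hP hq
    (by simpa using hnq)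
  rw [Fintype.card_fin, hcard] at hbound
  rw [rbinom_natCast, rbinom_add_sub_one, div_div_div_cancel_right₀ (by positivity),
    div_le_iff₀ (ascPochhammer_pos r q hq)]
  exact hbound
end

section
/- Let q be a prime power, let n = q² + 1, and let m = qn. Then z(m, n, 2, 3) = (q² + q)·n. -/
/-- The Zarankiewicz number `zar m n r = z(m, n, 2, r)`: the maximum number of
edges in a bipartite graph with parts of sizes `m` and `n` in which no two
vertices of the first part have `r` common neighbors in the second part. -/
noncomputable def zar (m n r : ℕ) : ℕ :=
  sSup {e | ∃ E : Finset (Fin m × Fin n),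
    (∀ a a' : Fin m, a ≠ a' →
      (Finset.univ.filter (fun b : Fin n => (a, b) ∈ E ∧ (a', b) ∈ E)).card < r) ∧
    E.card = e}

/-!
Distinct vertices of the first part share at most two neighbours, so the 3-subsets of the
neighbourhoods are pairwise distinct and `∑ₐ C(dₐ, 3) ≤ C(n, 3)`. Bounding `C(dₐ, 3)` below by
its tangent line at `dₐ = q + 1` and using `C(q² + 1, 3) = m · C(q + 1, 3)` gives at most
`m (q + 1)` edges. Equality holds for the incidence graph of any Steiner system
`S(3, q + 1, q² + 1)`, which then has exactly `m` blocks; the circles of the Miquelian inversive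
plane form one. Its points are `K ∪ {∞}` for `|K| = q²`, and its circles are the zero sets of the
nondegenerate Hermitian forms `a x^{q+1} + b x^q + b^q x + c` with `a, c ∈ 𝔽_q`. A circle has
`q + 1` points because the norm `x ↦ x^{q+1}` maps `Kˣ` onto `𝔽_qˣ` with fibres of size `q + 1`,
and `x ↦ b x^q + b^q x` (`b ≠ 0`) maps `K` onto `𝔽_q` with fibres of size `q`: each fibre is the
root set of a polynomial of that degree, and the fibre sizes must add up to `|Kˣ|`, resp. `|K|`.
Translations, dilations and `x ↦ 1/x` permute the circles and move any three points to `∞, 0, 1`,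
and the only circle through these is `𝔽_q ∪ {∞}`.
-/

open Finset

theorem Nat.choose_succ_add_mul_choose_le (t j r : ℕ) :
    t.choose (r + 1) + j * t.choose r ≤ (t + j).choose (r + 1) := by
  induction j with
  | zero => simp
  | succ j ih =>
    have := Nat.choose_le_choose r (Nat.le_add_right t j)
    rw [← add_assoc, Nat.choose_succ_succ', add_one_mul]
    omega

theorem Nat.choose_succ_le_add_mul_choose (t j r : ℕ) :
    (t + j).choose (r + 1) ≤ t.choose (r + 1) + j * (t + j).choose r := by
  induction j with
  | zero => simp
  | succ j ih =>
    have := Nat.choose_le_choose r (Nat.le_succ (t + j))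
    rw [← add_assoc, Nat.choose_succ_succ', add_one_mul]
    nlinarith

/-- The tangent line at `t` of the convex function `d ↦ d.choose (r + 1)` lies below it. -/
theorem Nat.choose_succ_add_mul_le (d t r : ℕ) :
    t.choose (r + 1) + d * t.choose r ≤ d.choose (r + 1) + t * t.choose r := by
  rcases Nat.le_total d t with h | h
  · obtain ⟨j, rfl⟩ := Nat.exists_eq_add_of_le h
    have := Nat.choose_succ_le_add_mul_choose d j r
    nlinarith
  · obtain ⟨j, rfl⟩ := Nat.exists_eq_add_of_le h
    have := Nat.choose_succ_add_mul_choose_le t j r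
    nlinarith

theorem Nat.choose_three_sq_add_one (q : ℕ) :
    (q ^ 2 + 1).choose 3 = q * (q ^ 2 + 1) * (q + 1).choose 3 := by
  apply Nat.eq_of_mul_eq_mul_left (Nat.factorial_pos 3)
  rw [mul_left_comm, ← Nat.descFactorial_eq_factorial_mul_choose,
    ← Nat.descFactorial_eq_factorial_mul_choose]
  rcases q with _ | r
  · simp
  · have : (r + 1) ^ 2 - 1 = r * (r + 2) := by
      rw [show (r + 1) ^ 2 = r * (r + 2) + 1 by ring, Nat.add_sub_cancel]
    simp [Nat.descFactorial_succ, this]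
    ring

section Combinatorics

variable {α β : Type*} [Fintype α] [Fintype β] [DecidableEq α] [DecidableEq β]

def IsK2rFree (r : ℕ) (E : Finset (α × β)) : Prop :=
  ∀ a a', a ≠ a' → #{b | (a, b) ∈ E ∧ (a', b) ∈ E} < r

theorem zar_eq_of_forall_le {m n r N : ℕ}
    (hle : ∀ E : Finset (Fin m × Fin n), IsK2rFree r E → #E ≤ N)
    (hex : ∃ E : Finset (Fin m × Fin n), IsK2rFree r E ∧ #E = N) : zar m n r = N := by
  obtain ⟨E, hE, rfl⟩ := hex
  refine le_antisymm (csSup_le ⟨_, E, hE, rfl⟩ ?_) (le_csSup ⟨#E, ?_⟩ ⟨E, hE, rfl⟩) <;>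
    rintro _ ⟨E', hE', rfl⟩ <;> exact hle E' hE'

theorem card_eq_sum_card_filter_mem (E : Finset (α × β)) : #E = ∑ a, #{b | (a, b) ∈ E} := by
  simp only [card_filter]
  rw [← Fintype.sum_prod_type' (fun a b => if (a, b) ∈ E then 1 else 0), ← card_filter]
  simp

theorem IsK2rFree.sum_choose_le {r : ℕ} {E : Finset (α × β)} (hE : IsK2rFree (r + 1) E) :
    ∑ a, (#{b | (a, b) ∈ E}).choose (r + 1) ≤ (Fintype.card β).choose (r + 1) := by
  have hdisj : ((univ : Finset α) : Set α).PairwiseDisjoint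
      fun a => powersetCard (r + 1) {b | (a, b) ∈ E} := by
    intro a _ a' _ hne
    refine disjoint_left.2 fun T hT hT' => ?_
    rw [mem_powersetCard] at hT hT'
    have hsub : T ⊆ ({b | (a, b) ∈ E ∧ (a', b) ∈ E} : Finset β) := fun b hb => by
      simpa using And.intro (mem_filter.1 (hT.1 hb)).2 (mem_filter.1 (hT'.1 hb)).2
    have := card_le_card hsub
    have := hE a a' hne
    omega
  calc ∑ a, (#{b | (a, b) ∈ E}).choose (r + 1)
      = #(univ.biUnion fun a => powersetCard (r + 1) {b | (a, b) ∈ E}) := by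
        simp [card_biUnion hdisj, card_powersetCard]
    _ ≤ #(powersetCard (r + 1) (univ : Finset β)) :=
        card_le_card (biUnion_subset.2 fun a _ => powersetCard_mono (subset_univ _))
    _ = (Fintype.card β).choose (r + 1) := by rw [card_powersetCard, card_univ]

theorem IsK2rFree.card_le {r t : ℕ} {E : Finset (α × β)} (hE : IsK2rFree (r + 1) E)
    (ht : r ≤ t) (hβ : (Fintype.card β).choose (r + 1) ≤ Fintype.card α * t.choose (r + 1)) :
    #E ≤ Fintype.card α * t := by
  have hconv := sum_le_sum fun a (_ : a ∈ univ) =>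
    Nat.choose_succ_add_mul_le (#{b | (a, b) ∈ E}) t r
  rw [sum_add_distrib, sum_add_distrib, ← sum_mul, ← card_eq_sum_card_filter_mem] at hconv
  simp only [sum_const, card_univ, smul_eq_mul] at hconv
  have := hE.sum_choose_le
  refine Nat.le_of_mul_le_mul_right ?_ (Nat.choose_pos ht)
  nlinarith

/-- A Steiner system `S(t, k, |β|)`: every `t`-subset lies in a block, and in only one since
distinct blocks meet in fewer than `t` points. -/
structure IsSteinerSystem (t k : ℕ) (F : Finset (Finset β)) : Prop where
  card_eq : ∀ B ∈ F, #B = k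
  card_inter_lt : ∀ B ∈ F, ∀ B' ∈ F, B ≠ B' → #(B ∩ B') < t
  exists_superset : ∀ T : Finset β, #T = t → ∃ B ∈ F, T ⊆ B

theorem IsSteinerSystem.card_mul_choose {t k : ℕ} {F : Finset (Finset β)}
    (hS : IsSteinerSystem t k F) : #F * k.choose t = (Fintype.card β).choose t := by
  have hdisj : (F : Set (Finset β)).PairwiseDisjoint (powersetCard t) := by
    intro B hB B' hB' hne
    refine disjoint_left.2 fun T hT hT' => ?_
    rw [mem_powersetCard] at hT hT'
    have := card_le_card (subset_inter hT.1 hT'.1)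
    have := hS.card_inter_lt B hB B' hB' hne
    omega
  have hcover : F.biUnion (powersetCard t) = powersetCard t univ := by
    refine (biUnion_subset.2 fun B _ => powersetCard_mono (subset_univ B)).antisymm fun T hT => ?_
    obtain ⟨B, hB, hTB⟩ := hS.exists_superset T (mem_powersetCard.1 hT).2
    exact mem_biUnion.2 ⟨B, hB, mem_powersetCard.2 ⟨hTB, (mem_powersetCard.1 hT).2⟩⟩
  rw [← card_univ, ← card_powersetCard, ← hcover, card_biUnion hdisj,
    sum_congr rfl fun B hB => by rw [card_powersetCard, hS.card_eq B hB], sum_const, smul_eq_mul]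

theorem IsSteinerSystem.exists_isK2rFree {t k m n : ℕ} {F : Finset (Finset β)}
    (hS : IsSteinerSystem t k F) (hm : #F = m) (hn : Fintype.card β = n) :
    ∃ E : Finset (Fin m × Fin n), IsK2rFree t E ∧ #E = m * k := by
  let eF : Fin m ≃ F := (F.equivFinOfCardEq hm).symm
  let eβ : Fin n ≃ β := (Fintype.equivFinOfCardEq hn).symm
  have hcard (S : Finset β) : #{b | eβ b ∈ S} = #S := card_equiv eβ (by simp)
  refine ⟨({x | eβ x.2 ∈ (eF x.1 : Finset β)} : Finset (Fin m × Fin n)), fun a a' hne => ?_, ?_⟩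
  · have := hS.card_inter_lt _ (eF a).2 _ (eF a').2 (by simpa [Subtype.ext_iff] using hne)
    simpa [← mem_inter, hcard] using this
  · simp [card_eq_sum_card_filter_mem, hcard, hS.card_eq]

theorem zar_eq_of_isSteinerSystem {r k m n : ℕ} {F : Finset (Finset β)}
    (hS : IsSteinerSystem (r + 1) k F) (hn : Fintype.card β = n)
    (hm : n.choose (r + 1) = m * k.choose (r + 1)) (hk : r + 1 ≤ k) :
    zar m n (r + 1) = m * k := by
  apply zar_eq_of_forall_le
  · intro E hE
    simpa using hE.card_le (by omega) (by simp [hm])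
  · refine hS.exists_isK2rFree ?_ hn
    have := hS.card_mul_choose
    rw [hn, hm] at this
    exact Nat.eq_of_mul_eq_mul_right (Nat.choose_pos hk) this

end Combinatorics

theorem card_filter_eq_of_card_mul_le {ι κ : Type*} [DecidableEq κ] {s : Finset ι} {t : Finset κ}
    {f : ι → κ} {k : ℕ} (hf : ∀ x ∈ s, f x ∈ t) (hle : ∀ y ∈ t, #{x ∈ s | f x = y} ≤ k)
    (hcard : #t * k ≤ #s) {y : κ} (hy : y ∈ t) : #{x ∈ s | f x = y} = k := by
  refine (sum_eq_sum_iff_of_le hle).1 (le_antisymm (sum_le_sum hle) ?_) y hy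
  rwa [← card_eq_sum_card_fiberwise hf, sum_const, smul_eq_mul]

section FiniteField

variable {K : Type*} [Field K] [Fintype K] {q : ℕ}

theorem two_le_of_card_eq_sq (hK : Fintype.card K = q ^ 2) : 2 ≤ q := by
  have := hK ▸ Fintype.one_lt_card (α := K)
  by_contra! h
  interval_cases q <;> simp at this

theorem add_pow_of_card_eq_sq (hK : Fintype.card K = q ^ 2) (x y : K) :
    (x + y) ^ q = x ^ q + y ^ q := by
  obtain ⟨n, hp, hn⟩ := FiniteField.card K (ringChar K)
  have : Fact (ringChar K).Prime := ⟨hp⟩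
  obtain ⟨i, -, rfl⟩ := (Nat.dvd_prime_pow hp).1 (hn ▸ hK ▸ dvd_pow_self q two_ne_zero)
  exact add_pow_char_pow x y ..

theorem sub_pow_of_card_eq_sq (hK : Fintype.card K = q ^ 2) (x y : K) :
    (x - y) ^ q = x ^ q - y ^ q := by
  rw [eq_sub_iff_add_eq, ← add_pow_of_card_eq_sq hK, sub_add_cancel]

theorem neg_pow_of_card_eq_sq (hK : Fintype.card K = q ^ 2) (x : K) : (-x) ^ q = -x ^ q := by
  have := two_le_of_card_eq_sq hK
  simpa [zero_pow (by omega : q ≠ 0)] using sub_pow_of_card_eq_sq hK 0 x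

theorem pow_pow_of_card_eq_sq (hK : Fintype.card K = q ^ 2) (x : K) : (x ^ q) ^ q = x := by
  rw [← pow_mul, ← sq, ← hK, FiniteField.pow_card]

theorem pow_succ_pow_of_card_eq_sq (hK : Fintype.card K = q ^ 2) (x : K) :
    (x ^ (q + 1)) ^ q = x ^ (q + 1) := by
  rw [pow_succ, mul_pow, pow_pow_of_card_eq_sq hK, mul_comm]

variable [DecidableEq K]

open Polynomial

theorem card_filter_eval_eq_zero_le {p : K[X]} (hp : p ≠ 0) : #{x | p.eval x = 0} ≤ p.natDegree :=
  card_le_degree_of_subset_roots fun x hx => by simpa [mem_roots hp] using hx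

theorem card_filter_pow_eq_le {n : ℕ} (hn : 0 < n) (s : K) : #{x : K | x ^ n = s} ≤ n := by
  simpa [sub_eq_zero] using card_filter_eval_eq_zero_le (X_pow_sub_C_ne_zero hn s)

theorem card_filter_pow_eq_self_le (hq : 1 < q) : #{x : K | x ^ q = x} ≤ q := by
  simpa [FiniteField.X_pow_card_sub_X_natDegree_eq K hq, sub_eq_zero] using
    card_filter_eval_eq_zero_le (FiniteField.X_pow_card_sub_X_ne_zero K hq)

theorem exists_ne_zero_pow_eq_neg (hK : Fintype.card K = q ^ 2) : ∃ b : K, b ≠ 0 ∧ b ^ q = -b := by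
  have hq := two_le_of_card_eq_sq hK
  have hcard : #({y | y ^ q = y} : Finset K) < #(univ : Finset K) := by
    rw [card_univ, hK]
    exact (card_filter_pow_eq_self_le hq).trans_lt (by nlinarith)
  obtain ⟨x, -, y, -, hxy, h⟩ := exists_ne_map_eq_of_card_lt_of_maps_to hcard
    (f := fun x => x ^ q + x) fun x _ => by
      simp [add_pow_of_card_eq_sq hK, pow_pow_of_card_eq_sq hK, add_comm]
  refine ⟨x - y, sub_ne_zero.2 hxy, ?_⟩
  rw [sub_pow_of_card_eq_sq hK]
  linear_combination h

theorem card_filter_pow_succ_eq (hK : Fintype.card K = q ^ 2) {s : K} (hs : s ^ q = s)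
    (hs0 : s ≠ 0) : #{x : K | x ^ (q + 1) = s} = q + 1 := by
  have hq := two_le_of_card_eq_sq hK
  have hunits : #({y | y ^ q = y ∧ y ≠ 0} : Finset K) + 1 ≤ q := by
    have h0 : (0 : K) ∈ ({y | y ^ q = y} : Finset K) := by simp [zero_pow (by omega : q ≠ 0)]
    have := card_filter_pow_eq_self_le (K := K) hq
    rw [← filter_filter, filter_ne', card_erase_of_mem h0]
    omega
  have hunitsK : #({x : K | x ≠ 0} : Finset K) + 1 = q ^ 2 := by
    rw [filter_ne', card_erase_add_one (mem_univ _), card_univ, hK]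
  have hfib := card_filter_eq_of_card_mul_le (s := {x : K | x ≠ 0})
    (t := {y | y ^ q = y ∧ y ≠ 0}) (f := (· ^ (q + 1))) (k := q + 1)
    (fun x hx => by simp_all [pow_succ_pow_of_card_eq_sq hK])
    (fun y _ => (card_le_card (filter_subset_filter _ (filter_subset _ _))).trans
      (card_filter_pow_eq_le q.succ_pos y))
    (by nlinarith) (by simp [hs, hs0] : s ∈ _)
  have hne (x : K) : x ^ (q + 1) = s ↔ x ≠ 0 ∧ x ^ (q + 1) = s :=
    ⟨fun h => ⟨by rintro rfl; simp [eq_comm, hs0] at h, h⟩, And.right⟩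
  rwa [filter_filter, ← filter_congr fun x _ => hne x] at hfib

theorem card_filter_mul_pow_add_eq (hK : Fintype.card K = q ^ 2) {b c : K} (hb : b ≠ 0)
    (hc : c ^ q = c) : #{x : K | b * x ^ q + b ^ q * x + c = 0} = q := by
  have hq := two_le_of_card_eq_sq hK
  have hfib (y : K) : #{x : K | b * x ^ q + b ^ q * x = y} ≤ q := by
    have hdeg : (C b * X ^ q + C (b ^ q) * X - C y).natDegree = q := by
      compute_degree!
      all_goals first | omega | simp [hb, show q ≠ 1 by omega, show q ≠ 0 by omega]
    have hne : C b * X ^ q + C (b ^ q) * X - C y ≠ 0 := fun h => by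
      rw [h, natDegree_zero] at hdeg
      omega
    have := card_filter_eval_eq_zero_le hne
    rw [hdeg] at this
    simpa [sub_eq_zero] using this
  have := card_filter_eq_of_card_mul_le (s := univ) (t := {y | y ^ q = y}) (k := q)
    (f := fun x => b * x ^ q + b ^ q * x)
    (fun x _ => by simp [add_pow_of_card_eq_sq hK, mul_pow, pow_pow_of_card_eq_sq hK]; ring)
    (fun y _ => hfib y) ?_ (by simp [neg_pow_of_card_eq_sq hK, hc] : -c ∈ _)
  · simpa [eq_neg_iff_add_eq_zero] using this
  · rw [card_univ, hK, sq]
    exact Nat.mul_le_mul_right _ (card_filter_pow_eq_self_le hq)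

end FiniteField

theorem card_filter_option {α : Type*} [Fintype α] (P : Option α → Prop) [DecidablePred P] :
    #{p | P p} = (if P none then 1 else 0) + #{x | P (some x)} := by
  simp only [card_filter, Fintype.sum_option]

structure HermForm (K : Type*) where
  a : K
  b : K
  c : K

namespace HermForm

variable {K : Type*} [Field K] (q : ℕ)

/-- The form `a X X^q + b X^q Y + b^q X Y^q + c Y Y^q`, evaluated at `(x : 1)` and at
`∞ = (1 : 0)`. -/
def eval (h : HermForm K) : Option K → K
  | none => h.a
  | some x => h.a * x ^ (q + 1) + h.b * x ^ q + h.b ^ q * x + h.c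

def disc (h : HermForm K) : K := h.b ^ (q + 1) - h.a * h.c

def IsNondegenerate (h : HermForm K) : Prop := h.a ^ q = h.a ∧ h.c ^ q = h.c ∧ h.disc q ≠ 0

variable {q}

theorem eval_eq_zero_iff_of_infty_zero_one [Fintype K] (hK : Fintype.card K = q ^ 2)
    {h : HermForm K} (hh : h.IsNondegenerate q) (hinf : h.eval q none = 0)
    (h₀ : h.eval q (some 0) = 0) (h₁ : h.eval q (some 1) = 0) (p : Option K) :
    h.eval q p = 0 ↔ ∀ x, p = some x → x ^ q = x := by
  have hq := two_le_of_card_eq_sq hK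
  simp only [eval, zero_pow (by omega : q ≠ 0), zero_pow (by omega : q + 1 ≠ 0), mul_zero,
    one_pow, mul_one, zero_add] at hinf h₀ h₁
  have hb : h.b ≠ 0 := fun hb => hh.2.2 (by simp [disc, hb, hinf])
  rcases p with _ | x
  · simp [eval, hinf]
  · have : h.eval q (some x) = h.b * (x ^ q - x) := by
      simp only [eval, hinf, h₀]
      linear_combination x * h₁ - x * hinf - x * h₀
    simp [this, hb, sub_eq_zero]

variable (q) [Fintype K] [DecidableEq K]

def circle (h : HermForm K) : Finset (Option K) := {p | h.eval q p = 0}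

variable {q}

@[simp] theorem mem_circle {h : HermForm K} {p : Option K} : p ∈ h.circle q ↔ h.eval q p = 0 := by
  simp [circle]

theorem card_circle (hK : Fintype.card K = q ^ 2) {h : HermForm K} (hh : h.IsNondegenerate q) :
    #(h.circle q) = q + 1 := by
  obtain ⟨ha, hc, hd⟩ := hh
  rw [circle, card_filter_option]
  by_cases ha0 : h.a = 0
  · have hb : h.b ≠ 0 := by
      rintro hb; simp [disc, ha0, hb] at hd
    simp only [eval, ha0, if_true, zero_mul, zero_add]
    rw [card_filter_mul_pow_add_eq hK hb hc, add_comm]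
  · set s := h.disc q / h.a ^ 2
    have hs : s ^ q = s := by
      have ha2 : (h.a ^ 2) ^ q = h.a ^ 2 := by rw [← pow_mul, mul_comm, pow_mul, ha]
      simp only [s, disc, div_pow, sub_pow_of_card_eq_sq hK, mul_pow, pow_succ_pow_of_card_eq_sq hK,
        ha, hc, ha2]
    have hconj (x : K) : (x + h.b / h.a) ^ q = x ^ q + h.b ^ q / h.a := by
      rw [add_pow_of_card_eq_sq hK, div_pow, ha]
    have hiff (x : K) : h.eval q (some x) = 0 ↔ (x + h.b / h.a) ^ (q + 1) = s := by
      have : h.a ^ 2 * (x + h.b / h.a) ^ (q + 1) = h.a * h.eval q (some x) + h.disc q := by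
        rw [pow_succ _ q, hconj, eval, disc]
        field_simp
        ring
      rw [eq_div_iff (pow_ne_zero 2 ha0), mul_comm, this, add_eq_right, mul_eq_zero,
        or_iff_right ha0]
    rw [if_neg (by simpa [eval] using ha0), zero_add, filter_congr fun x _ => hiff x,
      card_equiv (Equiv.addRight (h.b / h.a)) (t := {y | y ^ (q + 1) = s}) (by simp),
      card_filter_pow_succ_eq hK hs (div_ne_zero hd (pow_ne_zero 2 ha0))]

end HermForm

open HermForm

section CirclePerms

variable {K : Type*} [Field K] {q : ℕ}

variable (q) in
def MapsCircles (σ : Equiv.Perm (Option K)) : Prop :=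
  ∀ h : HermForm K, h.IsNondegenerate q →
    ∃ h' : HermForm K, h'.IsNondegenerate q ∧ ∀ p, h'.eval q (σ p) = 0 ↔ h.eval q p = 0

theorem mapsCircles_one : MapsCircles q (1 : Equiv.Perm (Option K)) :=
  fun h hh => ⟨h, hh, fun _ => Iff.rfl⟩

theorem MapsCircles.mul {σ τ : Equiv.Perm (Option K)} (hσ : MapsCircles q σ)
    (hτ : MapsCircles q τ) : MapsCircles q (σ * τ) := fun h hh => by
  obtain ⟨h₁, hh₁, e₁⟩ := hτ h hh
  obtain ⟨h₂, hh₂, e₂⟩ := hσ h₁ hh₁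
  exact ⟨h₂, hh₂, fun p => (e₂ (τ p)).trans (e₁ p)⟩

variable (K q) in
def circlePerms : Subgroup (Equiv.Perm (Option K)) where
  carrier := {σ | MapsCircles q σ ∧ MapsCircles q σ⁻¹}
  mul_mem' := fun ⟨h₁, h₂⟩ ⟨h₃, h₄⟩ => ⟨h₁.mul h₃, by rw [mul_inv_rev]; exact h₄.mul h₂⟩
  one_mem' := ⟨mapsCircles_one, by rw [inv_one]; exact mapsCircles_one⟩
  inv_mem' := fun ⟨h₁, h₂⟩ => ⟨h₂, by rwa [inv_inv]⟩

def invertPoint [DecidableEq K] : Option K → Option K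
  | none => some 0
  | some x => if x = 0 then none else some x⁻¹

theorem invertPoint_involutive [DecidableEq K] : Function.Involutive (invertPoint (K := K)) := by
  rintro (_ | x)
  · simp [invertPoint]
  · by_cases hx : x = 0 <;> simp [invertPoint, hx]

def inversion [DecidableEq K] : Equiv.Perm (Option K) := invertPoint_involutive.toPerm _

variable [Fintype K]

theorem mapsCircles_translate (hK : Fintype.card K = q ^ 2) (t : K) :
    MapsCircles q (Equiv.optionCongr (Equiv.addRight t)) := by
  rintro h ⟨ha, hc, hd⟩
  have hb : (h.b - h.a * t) ^ q = h.b ^ q - h.a * t ^ q := by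
    rw [sub_pow_of_card_eq_sq hK, mul_pow, ha]
  refine ⟨⟨h.a, h.b - h.a * t, h.c + h.a * t ^ (q + 1) - h.b * t ^ q - h.b ^ q * t⟩,
    ⟨ha, ?_, ?_⟩, ?_⟩
  · simp only [sub_pow_of_card_eq_sq hK, add_pow_of_card_eq_sq hK, mul_pow,
      pow_pow_of_card_eq_sq hK, pow_succ_pow_of_card_eq_sq hK, ha, hc]
    ring
  · convert hd using 1
    simp only [disc, pow_succ _ q, hb]
    ring
  · rintro (_ | x)
    · rfl
    · apply iff_of_eq
      congr 1
      simp only [Equiv.optionCongr_apply, Option.map_some, Equiv.coe_addRight, HermForm.eval,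
        pow_succ _ q, add_pow_of_card_eq_sq hK, hb]
      ring

theorem translate_mem_circlePerms (hK : Fintype.card K = q ^ 2) (t : K) :
    Equiv.optionCongr (Equiv.addRight t) ∈ circlePerms K q :=
  ⟨mapsCircles_translate hK t, by
    simpa [Equiv.Perm.inv_def, ← Equiv.optionCongr_symm] using mapsCircles_translate hK (-t)⟩

theorem mapsCircles_dilate (hK : Fintype.card K = q ^ 2) {s : K} (hs : s ≠ 0) :
    MapsCircles q (Equiv.optionCongr (Equiv.mulLeft₀ s hs)) := by
  rintro h ⟨ha, hc, hd⟩
  refine ⟨⟨h.a, h.b * s, h.c * s ^ (q + 1)⟩, ⟨ha, ?_, ?_⟩, ?_⟩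
  · rw [mul_pow, hc, pow_succ_pow_of_card_eq_sq hK]
  · have : disc q ⟨h.a, h.b * s, h.c * s ^ (q + 1)⟩ = s ^ (q + 1) * h.disc q := by
      simp only [disc, mul_pow]
      ring
    rw [this]
    exact mul_ne_zero (pow_ne_zero _ hs) hd
  · rintro (_ | x)
    · rfl
    · have : HermForm.eval q ⟨h.a, h.b * s, h.c * s ^ (q + 1)⟩ (some (s * x)) =
          s ^ (q + 1) * h.eval q (some x) := by
        simp only [HermForm.eval, mul_pow, pow_succ]
        ring
      simp [this, hs]

theorem dilate_mem_circlePerms (hK : Fintype.card K = q ^ 2) {s : K} (hs : s ≠ 0) :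
    Equiv.optionCongr (Equiv.mulLeft₀ s hs) ∈ circlePerms K q :=
  ⟨mapsCircles_dilate hK hs, by
    convert mapsCircles_dilate hK (inv_ne_zero hs) using 1
    ext p : 1
    simp [Equiv.Perm.inv_def, ← Equiv.optionCongr_symm]⟩

variable [DecidableEq K]

theorem mapsCircles_inversion (hK : Fintype.card K = q ^ 2) :
    MapsCircles q (inversion (K := K)) := by
  have hq := two_le_of_card_eq_sq hK
  rintro h ⟨ha, hc, hd⟩
  refine ⟨⟨h.c, h.b ^ q, h.a⟩, ⟨hc, ha, ?_⟩, ?_⟩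
  · convert hd using 1
    simp only [disc, pow_succ _ q, pow_pow_of_card_eq_sq hK]
    ring
  · rintro (_ | x)
    · simp [inversion, invertPoint, HermForm.eval, zero_pow (by omega : q ≠ 0)]
    · by_cases hx : x = 0
      · simp [inversion, invertPoint, HermForm.eval, hx, zero_pow (by omega : q ≠ 0)]
      · have : HermForm.eval q ⟨h.c, h.b ^ q, h.a⟩ (some x⁻¹) =
            h.eval q (some x) / x ^ (q + 1) := by
          simp only [HermForm.eval, pow_pow_of_card_eq_sq hK, inv_pow]
          field_simp
          ring
        simp [inversion, invertPoint, hx, this]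

theorem inversion_mem_circlePerms (hK : Fintype.card K = q ^ 2) :
    inversion ∈ circlePerms K q :=
  ⟨mapsCircles_inversion hK, by
    simpa [inversion, Equiv.Perm.inv_def] using mapsCircles_inversion hK⟩

theorem exists_mem_circlePerms_apply (hK : Fintype.card K = q ^ 2) {p₁ p₂ p₃ : Option K}
    (h₁₂ : p₁ ≠ p₂) (h₁₃ : p₁ ≠ p₃) (h₂₃ : p₂ ≠ p₃) :
    ∃ σ ∈ circlePerms K q, σ p₁ = none ∧ σ p₂ = some 0 ∧ σ p₃ = some 1 := by
  obtain ⟨τ, hτ, hτ₁⟩ : ∃ τ ∈ circlePerms K q, τ p₁ = none := by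
    cases p₁ with
    | none => exact ⟨1, one_mem _, rfl⟩
    | some t =>
      exact ⟨_ * _, mul_mem (inversion_mem_circlePerms hK) (translate_mem_circlePerms hK (-t)),
        by simp [inversion, invertPoint]⟩
  obtain ⟨u, hu⟩ := Option.ne_none_iff_exists'.1 (hτ₁ ▸ τ.injective.ne h₁₂.symm)
  obtain ⟨w, hw⟩ := Option.ne_none_iff_exists'.1 (hτ₁ ▸ τ.injective.ne h₁₃.symm)
  have huw : w - u ≠ 0 := sub_ne_zero.2 fun h => h₂₃ (τ.injective (by rw [hu, hw, h]))
  refine ⟨_ * _ * τ, mul_mem (mul_mem (dilate_mem_circlePerms hK (inv_ne_zero huw))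
    (translate_mem_circlePerms hK (-u))) hτ, ?_, ?_, ?_⟩ <;>
    simp [hτ₁, hu, hw, huw, ← sub_eq_add_neg]

end CirclePerms

section InversivePlane

variable {K : Type*} [Field K] [Fintype K] [DecidableEq K] {q : ℕ}

theorem exists_isNondegenerate_subset_circle (hK : Fintype.card K = q ^ 2) {p₁ p₂ p₃ : Option K}
    (h₁₂ : p₁ ≠ p₂) (h₁₃ : p₁ ≠ p₃) (h₂₃ : p₂ ≠ p₃) :
    ∃ h : HermForm K, h.IsNondegenerate q ∧ {p₁, p₂, p₃} ⊆ h.circle q := by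
  have hq := two_le_of_card_eq_sq hK
  obtain ⟨σ, hσ, h₁, h₂, h₃⟩ := exists_mem_circlePerms_apply hK h₁₂ h₁₃ h₂₃
  obtain ⟨b, hb, hbq⟩ := exists_ne_zero_pow_eq_neg hK
  obtain ⟨h, hh, hσh⟩ := hσ.2 ⟨0, b, 0⟩
    ⟨zero_pow (by omega), zero_pow (by omega), by simp [disc, hb]⟩
  refine ⟨h, hh, ?_⟩
  simp only [insert_subset_iff, singleton_subset_iff, mem_circle]
  rw [← Equiv.Perm.inv_eq_iff_eq.2 h₁.symm, ← Equiv.Perm.inv_eq_iff_eq.2 h₂.symm,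
    ← Equiv.Perm.inv_eq_iff_eq.2 h₃.symm, hσh, hσh, hσh]
  simp [HermForm.eval, hbq, zero_pow (by omega : q ≠ 0)]

theorem circle_eq_of_subset (hK : Fintype.card K = q ^ 2) {p₁ p₂ p₃ : Option K}
    (h₁₂ : p₁ ≠ p₂) (h₁₃ : p₁ ≠ p₃) (h₂₃ : p₂ ≠ p₃) {h h' : HermForm K}
    (hh : h.IsNondegenerate q) (hh' : h'.IsNondegenerate q) (hs : {p₁, p₂, p₃} ⊆ h.circle q)
    (hs' : {p₁, p₂, p₃} ⊆ h'.circle q) : h.circle q = h'.circle q := by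
  obtain ⟨σ, hσ, h₁, h₂, h₃⟩ := exists_mem_circlePerms_apply hK h₁₂ h₁₃ h₂₃
  obtain ⟨g, hg, hσg⟩ := hσ.1 h hh
  obtain ⟨g', hg', hσg'⟩ := hσ.1 h' hh'
  simp only [insert_subset_iff, singleton_subset_iff, mem_circle] at hs hs'
  have hgσ := eval_eq_zero_iff_of_infty_zero_one hK hg (h₁ ▸ (hσg p₁).2 hs.1)
    (h₂ ▸ (hσg p₂).2 hs.2.1) (h₃ ▸ (hσg p₃).2 hs.2.2)
  have hgσ' := eval_eq_zero_iff_of_infty_zero_one hK hg' (h₁ ▸ (hσg' p₁).2 hs'.1)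
    (h₂ ▸ (hσg' p₂).2 hs'.2.1) (h₃ ▸ (hσg' p₃).2 hs'.2.2)
  ext p
  rw [mem_circle, mem_circle, ← hσg, ← hσg', hgσ, hgσ']

theorem exists_isSteinerSystem_of_card_eq_sq (hK : Fintype.card K = q ^ 2) :
    ∃ F : Finset (Finset (Option K)), IsSteinerSystem 3 (q + 1) F := by
  classical
  refine ⟨({S | ∃ h : HermForm K, h.IsNondegenerate q ∧ h.circle q = S} : Finset _), ⟨?_, ?_, ?_⟩⟩
  · simp only [mem_filter, mem_univ, true_and]
    rintro _ ⟨h, hh, rfl⟩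
    exact card_circle hK hh
  · simp only [mem_filter, mem_univ, true_and]
    rintro _ ⟨h, hh, rfl⟩ _ ⟨h', hh', rfl⟩ hne
    by_contra! hcard
    obtain ⟨T, hT, hT3⟩ := exists_subset_card_eq hcard
    obtain ⟨p₁, p₂, p₃, h₁₂, h₁₃, h₂₃, rfl⟩ := card_eq_three.1 hT3
    exact hne (circle_eq_of_subset hK h₁₂ h₁₃ h₂₃ hh hh' (hT.trans inter_subset_left)
      (hT.trans inter_subset_right))
  · intro T hT3
    obtain ⟨p₁, p₂, p₃, h₁₂, h₁₃, h₂₃, rfl⟩ := card_eq_three.1 hT3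
    obtain ⟨h, hh, hT⟩ := exists_isNondegenerate_subset_circle hK h₁₂ h₁₃ h₂₃
    exact ⟨h.circle q, by simpa using ⟨h, hh, rfl⟩, hT⟩

end InversivePlane

/-- for a prime power `q`, `n = q² + 1` and `m = qn`,
`z(m, n, 2, 3) = (q² + q)·n`. -/
theorem zarankiewicz_inversive (q : ℕ) (hq : IsPrimePow q) :
    zar (q * (q ^ 2 + 1)) (q ^ 2 + 1) 3 = (q ^ 2 + q) * (q ^ 2 + 1) := by
  obtain ⟨p, k, hp, hk, hpk⟩ := hq
  have : Fact p.Prime := ⟨hp.nat_prime⟩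
  let K := GaloisField p (2 * k)
  have : Fintype K := Fintype.ofFinite K
  have : DecidableEq K := Classical.decEq K
  have hK : Fintype.card K = q ^ 2 := by
    rw [← Nat.card_eq_fintype_card, GaloisField.card p _ (by omega), ← hpk, ← pow_mul, mul_comm]
  obtain ⟨F, hF⟩ := exists_isSteinerSystem_of_card_eq_sq hK
  rw [show (q ^ 2 + q) * (q ^ 2 + 1) = q * (q ^ 2 + 1) * (q + 1) by ring]
  exact zar_eq_of_isSteinerSystem hF (by rw [Fintype.card_option, hK])
    (Nat.choose_three_sq_add_one q) (by have := two_le_of_card_eq_sq hK; omega)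
end
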